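/- Let d ≥ 1 and let H = {H_i}_{i=1}^{d²} be a MIC for d×d complex matrices with all weights h_i = tr H_i strictly positive, Gram matrix G, bias matrix A = diag(h_i), and Born matrix Φ = AG^{-1}. Set ρ_i := H_i/h_i. Then for every d×d complex matrix ρ and every d×d complex matrix D: tr(Dρ) = Σ_{j,k} tr(Dρ_j)·[Φ]_{jk}·tr(H_kρ). (This is the Born Rule written in the form Q(D) = P(D|H)·Φ·P(H).) -/

import Mathlib

open Matrix BigOperators
open scoped ComplexOrder Kronecker

/-- A measure basis: a linearly independent family of `d²` Hermitian `d×d` complex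
matrices summing to the identity, with nonnegative traces. -/
def IsMeasureBasis {d : ℕ} (L : Fin (d ^ 2) → Matrix (Fin d) (Fin d) ℂ) : Prop :=
  (∀ i, (L i).IsHermitian) ∧ LinearIndependent ℝ L ∧ (∑ i, L i) = 1 ∧ ∀ i, 0 ≤ ((L i).trace).re

/-- A Wigner basis: an orthogonal measure basis. -/
def IsWignerBasis {d : ℕ} (L : Fin (d ^ 2) → Matrix (Fin d) (Fin d) ℂ) : Prop :=
  IsMeasureBasis L ∧ ∀ i j, i ≠ j → (L i * L j).trace = 0

/-- The rescaled frame operator `S_L(X) = ∑ⱼ (tr(X Lⱼ)/lⱼ) Lⱼ`. -/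
noncomputable def rsFrameOp {n : Type*} [Fintype n] {m : Type*} [Fintype m] [DecidableEq m]
    (L : n → Matrix m m ℂ) (X : Matrix m m ℂ) : Matrix m m ℂ :=
  ∑ j, (((X * L j).trace) / ((L j).trace)) • L j

/-- A map on matrices that is ℝ-linear, Hermiticity-preserving, self-adjoint with respect to
the Hilbert–Schmidt inner product on Hermitian matrices, and positive. -/
def IsPosSelfAdjMap {m : Type*} [Fintype m]
    (T : Matrix m m ℂ → Matrix m m ℂ) : Prop :=
  IsLinearMap ℝ T ∧ (∀ X, X.IsHermitian → (T X).IsHermitian) ∧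
  (∀ X Y, X.IsHermitian → Y.IsHermitian → (T X * Y).trace = (X * T Y).trace) ∧
  (∀ X, X.IsHermitian → 0 ≤ ((X * T X).trace).re)

/-- `T` is the (unique) positive self-adjoint inverse square root of the rescaled frame
operator of `L`, i.e. `S_L ∘ T ∘ T = id` on Hermitian matrices; `PW(L) i = T (L i)`. -/
def IsInvSqrtOfFrameOp {n : Type*} [Fintype n] {m : Type*} [Fintype m] [DecidableEq m]
    (L : n → Matrix m m ℂ) (T : Matrix m m ℂ → Matrix m m ℂ) : Prop :=
  IsPosSelfAdjMap T ∧ ∀ X : Matrix m m ℂ, X.IsHermitian → rsFrameOp L (T (T X)) = X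

/-!
For Hermitian `Hᵢ` the Gram matrix `G = (re tr(Hᵢ Hⱼ))` is the Gram matrix of the real
Hilbert–Schmidt inner product, so ℝ-linear independence makes it positive definite. Since the
traces `tr(Hᵢ Hⱼ)` are real, invertibility of `G` also makes `H` ℂ-linearly independent, hence a
basis of all `d × d` complex matrices, in which every `ρ` expands as
`ρ = ∑ⱼ (∑ₖ G⁻¹ⱼₖ tr(Hₖ ρ)) Hⱼ`. Multiplying by `D` and taking traces gives the claim, because
`Φⱼₖ = hⱼ G⁻¹ⱼₖ`.
-/

theorem Matrix.IsHermitian.ofReal_re_trace_mul {n : Type*} [Fintype n] {A B : Matrix n n ℂ}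
    (hA : A.IsHermitian) (hB : B.IsHermitian) : (((A * B).trace.re : ℝ) : ℂ) = (A * B).trace := by
  refine Complex.conj_eq_iff_re.mp ?_
  rw [starRingEnd_apply, ← trace_conjTranspose, conjTranspose_mul, hA.eq, hB.eq, trace_mul_comm]

theorem Matrix.IsHermitian.re_trace_mul_self_pos {n : Type*} [Fintype n] {M : Matrix n n ℂ}
    (hM : M.IsHermitian) (h : M ≠ 0) : 0 < (M * M).trace.re := by
  have hpos : 0 < (Mᴴ * M).trace :=
    (posSemidef_conjTranspose_mul_self M).trace_nonneg.lt_of_ne'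
      (mt trace_conjTranspose_mul_self_eq_zero_iff.mp h)
  rw [hM.eq] at hpos
  exact (Complex.pos_iff.mp hpos).1

section TraceGram

variable {ι n : Type*} [Fintype ι] [Fintype n] {H : ι → Matrix n n ℂ}

noncomputable def traceGram (H : ι → Matrix n n ℂ) : Matrix ι ι ℝ :=
  of fun i j => ((H i * H j).trace).re

theorem dotProduct_traceGram_mulVec (x : ι → ℝ) :
    x ⬝ᵥ traceGram H *ᵥ x = ((∑ i, x i • H i) * ∑ i, x i • H i).trace.re := by
  simp only [traceGram, dotProduct, mulVec, of_apply, Finset.sum_mul, Finset.mul_sum, trace_sum,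
    smul_mul_assoc, mul_smul_comm, trace_smul, Complex.re_sum, Complex.real_smul, Complex.re_ofReal_mul]
  rw [Finset.sum_comm]
  refine Finset.sum_congr rfl fun _ _ => Finset.sum_congr rfl fun _ _ => by ring

theorem posDef_traceGram (hH : ∀ i, (H i).IsHermitian)
    (hli : LinearIndependent ℝ H) : (traceGram H).PosDef := by
  refine .of_dotProduct_mulVec_pos ?_ fun x hx => ?_
  · ext i j
    simp only [traceGram, conjTranspose_apply, of_apply, star_trivial]
    rw [trace_mul_comm]
  · rw [star_trivial, dotProduct_traceGram_mulVec]
    refine IsHermitian.re_trace_mul_self_pos ?_ fun h0 => hx ?_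
    · exact isSelfAdjoint_sum _ fun i _ => (hH i).smul (IsSelfAdjoint.all (x i))
    · exact funext (Fintype.linearIndependent_iff.mp hli x h0)

omit [Fintype ι] in
theorem ofReal_traceGram (hH : ∀ i, (H i).IsHermitian) (i j : ι) :
    ((traceGram H i j : ℝ) : ℂ) = (H i * H j).trace :=
  (hH i).ofReal_re_trace_mul (hH j)

theorem linearIndependent_complex_of_isHermitian [DecidableEq ι] (hH : ∀ i, (H i).IsHermitian)
    (hli : LinearIndependent ℝ H) : LinearIndependent ℂ H := by
  refine Fintype.linearIndependent_iff.mpr fun c hc => congrFun (eq_zero_of_vecMul_eq_zero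
    (M := (traceGram H).map Complex.ofRealHom) ?_ (funext fun j => ?_))
  · rw [← RingHom.mapMatrix_apply, ← RingHom.map_det]
    exact Complex.ofReal_ne_zero.mpr (posDef_traceGram hH hli).det_pos.ne'
  · simpa [vecMul, dotProduct, Finset.sum_mul, trace_sum, ofReal_traceGram hH] using
      congrArg (fun X => (X * H j).trace) hc

theorem span_complex_eq_top_of_isHermitian [DecidableEq ι] (hH : ∀ i, (H i).IsHermitian)
    (hli : LinearIndependent ℝ H) (hcard : Fintype.card ι = Fintype.card n ^ 2) :
    Submodule.span ℂ (Set.range H) = ⊤ := by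
  refine (linearIndependent_complex_of_isHermitian hH hli).span_eq_top_of_card_eq_finrank' ?_
  rw [Module.finrank_matrix, Module.finrank_self, mul_one, hcard, sq]

theorem sum_traceGram_inv_mul_trace_smul_eq_self [DecidableEq ι] (hH : ∀ i, (H i).IsHermitian)
    (hli : LinearIndependent ℝ H) (hcard : Fintype.card ι = Fintype.card n ^ 2)
    (ρ : Matrix n n ℂ) :
    ∑ j, ∑ k, ((((traceGram H)⁻¹ j k : ℝ) : ℂ) * (H k * ρ).trace) • H j = ρ := by
  let P : Matrix n n ℂ →ₗ[ℂ] Matrix n n ℂ := ∑ j, ∑ k, (((traceGram H)⁻¹ j k : ℝ) : ℂ) •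
    (traceLinearMap n ℂ ℂ ∘ₗ LinearMap.mulLeft ℂ (H k)).smulRight (H j)
  have hP : P = LinearMap.id :=
    LinearMap.ext_on_range (span_complex_eq_top_of_isHermitian hH hli hcard) fun m => by
      have hG : IsUnit (traceGram H).det := (posDef_traceGram hH hli).det_pos.ne'.isUnit
      -- on `H m` the double sum collapses to `∑ j, (G⁻¹ * G) j m • H j`
      simp only [P, LinearMap.coe_sum, LinearMap.coe_smul, LinearMap.coe_smulRight,
        LinearMap.coe_comp, Function.comp_apply, LinearMap.mulLeft_apply, traceLinearMap_apply,
        Complex.coe_smul, Finset.sum_apply, Pi.smul_apply, LinearMap.id_coe, id_eq,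
        ← ofReal_traceGram hH, smul_smul, ← Finset.sum_smul, ← mul_apply, nonsing_inv_mul _ hG,
        one_apply, ite_smul, one_smul, zero_smul, Finset.sum_ite_eq', Finset.mem_univ, if_true]
  simpa only [P, LinearMap.coe_sum, LinearMap.coe_smul, LinearMap.coe_smulRight,
    LinearMap.coe_comp, Function.comp_apply, LinearMap.mulLeft_apply, traceLinearMap_apply,
    Finset.sum_apply, Pi.smul_apply, LinearMap.id_coe, id_eq, smul_smul] using
    LinearMap.congr_fun hP ρ

theorem trace_mul_eq_sum_traceGram_inv [DecidableEq ι] (hH : ∀ i, (H i).IsHermitian)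
    (hli : LinearIndependent ℝ H) (hcard : Fintype.card ι = Fintype.card n ^ 2)
    (D ρ : Matrix n n ℂ) :
    (D * ρ).trace =
      ∑ j, ∑ k, (D * H j).trace * (((traceGram H)⁻¹ j k : ℝ) : ℂ) * (H k * ρ).trace := by
  conv_lhs => rw [← sum_traceGram_inv_mul_trace_smul_eq_self hH hli hcard ρ]
  simp only [Matrix.mul_sum, Matrix.mul_smul, trace_sum, trace_smul, smul_eq_mul]
  exact Finset.sum_congr rfl fun j _ => Finset.sum_congr rfl fun k _ => by ring

end TraceGram

theorem born_rule_ltp_analog_general {d : ℕ}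
    (H : Fin (d ^ 2) → Matrix (Fin d) (Fin d) ℂ)
    (hH : IsMeasureBasis H)
    (hpos : ∀ i, 0 < ((H i).trace).re)
    (G A : Matrix (Fin (d ^ 2)) (Fin (d ^ 2)) ℝ)
    (hG : ∀ i j, G i j = ((H i * H j).trace).re)
    (hA : A = Matrix.diagonal fun i => ((H i).trace).re) :
    ∀ ρ D : Matrix (Fin d) (Fin d) ℂ,
      (D * ρ).trace =
        ∑ j, ∑ k, (D * (((((H j).trace).re)⁻¹ : ℝ) • H j)).trace *
          (((A * G⁻¹) j k : ℝ) : ℂ) * (H k * ρ).trace := by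
  intro ρ D
  obtain ⟨hherm, hli, -, -⟩ := hH
  obtain rfl : G = traceGram H := ext hG
  rw [trace_mul_eq_sum_traceGram_inv hherm hli (by simp) D ρ]
  refine Finset.sum_congr rfl fun j _ => Finset.sum_congr rfl fun k _ => ?_
  have hj : (((H j).trace.re : ℝ) : ℂ) ≠ 0 := Complex.ofReal_ne_zero.mpr (hpos j).ne'
  rw [hA, diagonal_mul, Matrix.mul_smul, trace_smul, Complex.real_smul]
  push_cast
  field_simp

/-- the Born Rule in the form `Q(D) = P(D|H) Φ P(H)`: for a MIC `H` with
Born matrix `Φ = AG⁻¹` and `ρⱼ = Hⱼ/hⱼ`, every pair of matrices `D, ρ` satisfies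
`tr(Dρ) = ∑ⱼₖ tr(Dρⱼ) Φⱼₖ tr(Hₖρ)`. -/
theorem born_rule_ltp_analog {d : ℕ} [NeZero d]
    (H : Fin (d ^ 2) → Matrix (Fin d) (Fin d) ℂ)
    (hH : IsMeasureBasis H) (hHpsd : ∀ i, (H i).PosSemidef)
    (hpos : ∀ i, 0 < ((H i).trace).re)
    (G A : Matrix (Fin (d ^ 2)) (Fin (d ^ 2)) ℝ)
    (hG : ∀ i j, G i j = ((H i * H j).trace).re)
    (hA : A = Matrix.diagonal fun i => ((H i).trace).re) :
    ∀ ρ D : Matrix (Fin d) (Fin d) ℂ,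
      (D * ρ).trace =
        ∑ j, ∑ k, (D * (((((H j).trace).re)⁻¹ : ℝ) • H j)).trace *
          (((A * G⁻¹) j k : ℝ) : ℂ) * (H k * ρ).trace :=
  born_rule_ltp_analog_general H hH hpos G A hG hA
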